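/- arXiv:math/0310197 — 4 statements merged into one kernel-verified Lean document; each statement's English description precedes it below -/
import Mathlib

section
/- Let k ≥ 1 and let a_1 < a_2 < … < a_k be positive integers, A = {a_1,…,a_k}. In ℤ[[x,y,r,ℓ,d]] set b_j = x^{a_j}·y for 1 ≤ j ≤ k. Then C_A(x;y;r,ℓ,d) · ( ∏_{j=1}^k (1 − b_j(ℓ−d)) − d·∑_{j=1}^k b_j · ∏_{i=1}^{j−1}(1 − b_i(ℓ−r)) · ∏_{i=j+1}^{k}(1 − b_i(ℓ−d)) ) = ∏_{j=1}^k (1 − b_j(ℓ−d)) + (1−d)·∑_{j=1}^k b_j · ∏_{i=1}^{j−1}(1 − b_i(ℓ−r)) · ∏_{i=j+1}^{k}(1 − b_i(ℓ−d)). (This is the denominator-cleared form of C_A(x;y;r,ℓ,d) = [1 + (1−d)∑_j (b_j/(1−b_j(ℓ−d)))∏_{i<j}(1−b_i(ℓ−r))/(1−b_i(ℓ−d))] / [1 − d∑_j (b_j/(1−b_j(ℓ−d)))∏_{i<j}(1−b_i(ℓ−r))/(1−b_i(ℓ−d))]; the factor multiplying C_A has constant term 1 and hence is invertible.) -/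
open scoped Classical

/-- Number of rises of a list (adjacent pairs with strict increase). -/
def risesL (l : List ℕ) : ℕ := (l.zip l.tail).countP (fun p => decide (p.1 < p.2))

/-- Number of levels of a list (adjacent equal pairs). -/
def levelsL (l : List ℕ) : ℕ := (l.zip l.tail).countP (fun p => decide (p.1 = p.2))

/-- Number of drops of a list (adjacent pairs with strict decrease). -/
def dropsL (l : List ℕ) : ℕ := (l.zip l.tail).countP (fun p => decide (p.2 < p.1))

/-- The generating function `C_A(x;y;r,ℓ,d)` in `ℤ[[x,y,r,ℓ,d]]`, with
`x = X 0`, `y = X 1`, `r = X 2`, `ℓ = X 3`, `d = X 4`: the coefficient of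
`x^n y^p r^s ℓ^t d^u` is the number of compositions of `n` with all parts in
`A = {a 1, …, a k}`, with `p` parts, `s` rises, `t` levels and `u` drops. -/
noncomputable def CA {k : ℕ} (a : Fin k → ℕ) : MvPowerSeries (Fin 5) ℤ :=
  fun m => ((Finset.univ.filter (fun c : Composition (m 0) =>
      (∀ p ∈ c.blocks, ∃ i, a i = p) ∧ c.length = m 1 ∧
      risesL c.blocks = m 2 ∧ levelsL c.blocks = m 3 ∧ dropsL c.blocks = m 4)).card : ℤ)

/-- `b j = x^{a_j} · y`. -/
noncomputable def bb {k : ℕ} (a : Fin k → ℕ) (j : Fin k) : MvPowerSeries (Fin 5) ℤ :=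
  (MvPowerSeries.X 0) ^ (a j) * MvPowerSeries.X 1

noncomputable def wt (l : List ℕ) : Fin 5 →₀ ℕ :=
  Finsupp.single 0 l.sum + Finsupp.single 1 l.length +
  Finsupp.single 2 (risesL l) + Finsupp.single 3 (levelsL l) + Finsupp.single 4 (dropsL l)

lemma wt_apply (l : List ℕ) :
    wt l 0 = l.sum ∧ wt l 1 = l.length ∧ wt l 2 = risesL l ∧ wt l 3 = levelsL l
      ∧ wt l 4 = dropsL l := by
  refine ⟨?_, ?_, ?_, ?_, ?_⟩ <;> simp [wt, Finsupp.single_apply]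

lemma wt_eq_iff (l : List ℕ) (m : Fin 5 →₀ ℕ) :
    wt l = m ↔ (l.sum = m 0 ∧ l.length = m 1 ∧ risesL l = m 2 ∧ levelsL l = m 3
      ∧ dropsL l = m 4) := by
  obtain ⟨h0, h1, h2, h3, h4⟩ := wt_apply l
  constructor
  · rintro rfl; exact ⟨h0.symm, h1.symm, h2.symm, h3.symm, h4.symm⟩
  · rintro ⟨g0, g1, g2, g3, g4⟩
    ext i
    fin_cases i <;> simp only [Fin.isValue, Fin.mk_zero, Fin.mk_one] <;>
      first
      | exact h0.trans g0
      | exact h1.trans g1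
      | (show wt l 2 = m 2; exact h2.trans g2)
      | (show wt l 3 = m 3; exact h3.trans g3)
      | (show wt l 4 = m 4; exact h4.trans g4)

lemma wt_nil : wt ([] : List ℕ) = 0 := by
  simp [wt, risesL, levelsL, dropsL]

lemma wt_single (p : ℕ) : wt [p] = Finsupp.single 0 p + Finsupp.single 1 1 := by
  simp [wt, risesL, levelsL, dropsL]

lemma risesL_cons (p p' : ℕ) (t : List ℕ) :
    risesL (p :: p' :: t) = (if p < p' then 1 else 0) + risesL (p' :: t) := by
  simp [risesL, List.countP_cons]
  omega

lemma levelsL_cons (p p' : ℕ) (t : List ℕ) :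
    levelsL (p :: p' :: t) = (if p = p' then 1 else 0) + levelsL (p' :: t) := by
  simp [levelsL, List.countP_cons]
  omega

lemma dropsL_cons (p p' : ℕ) (t : List ℕ) :
    dropsL (p :: p' :: t) = (if p' < p then 1 else 0) + dropsL (p' :: t) := by
  simp [dropsL, List.countP_cons]
  omega

lemma wt_cons (p p' : ℕ) (t : List ℕ) :
    wt (p :: p' :: t) = (Finsupp.single 0 p + Finsupp.single 1 1)
      + Finsupp.single (if p < p' then (2 : Fin 5) else if p = p' then 3 else 4) 1
      + wt (p' :: t) := by
  rcases lt_trichotomy p p' with h | h | h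
  · rw [if_pos h]
    simp only [wt, risesL_cons, levelsL_cons, dropsL_cons, if_pos h, if_neg h.ne,
      if_neg (lt_asymm h), List.sum_cons, List.length_cons]
    ext i; fin_cases i <;> simp [Finsupp.single_apply] <;> omega
  · rw [if_neg (by omega : ¬ p < p'), if_pos h]
    simp only [wt, risesL_cons, levelsL_cons, dropsL_cons, if_pos h,
      List.sum_cons, List.length_cons]
    rw [if_neg (by omega), if_neg (by omega)]
    ext i; fin_cases i <;> simp [Finsupp.single_apply] <;> omega
  · rw [if_neg (by omega), if_neg (by omega)]
    simp only [wt, risesL_cons, levelsL_cons, dropsL_cons, if_pos h,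
      List.sum_cons, List.length_cons]
    rw [if_neg (by omega), if_neg (by omega)]
    ext i; fin_cases i <;> simp [Finsupp.single_apply] <;> omega

/-- all parts in the alphabet -/
def oka {k : ℕ} (a : Fin k → ℕ) (l : List ℕ) : Prop := ∀ p ∈ l, ∃ i, a i = p

noncomputable def LSet (m : Fin 5 →₀ ℕ) (P : List ℕ → Prop) : Finset (List ℕ) :=
  ((Finset.univ : Finset (Composition (m 0))).image Composition.blocks).filter
    (fun l => wt l = m ∧ P l)

lemma mem_LSet {m : Fin 5 →₀ ℕ} {P : List ℕ → Prop} {l : List ℕ} :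
    l ∈ LSet m P ↔ (∀ p ∈ l, 0 < p) ∧ wt l = m ∧ P l := by
  simp only [LSet, Finset.mem_filter, Finset.mem_image, Finset.mem_univ, true_and]
  constructor
  · rintro ⟨⟨c, rfl⟩, hw, hP⟩
    exact ⟨fun p hp => c.blocks_pos hp, hw, hP⟩
  · rintro ⟨hpos, hw, hP⟩
    have hsum : l.sum = m 0 := ((wt_eq_iff l m).1 hw).1
    exact ⟨⟨⟨l, fun {i} hi => hpos i hi, hsum⟩, rfl⟩, hw, hP⟩

lemma blocks_inj (n : ℕ) : Function.Injective (Composition.blocks (n := n)) := by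
  intro c d h
  cases c; cases d; simpa using h

lemma CA_eq {k : ℕ} (a : Fin k → ℕ) (m : Fin 5 →₀ ℕ) :
    CA a m = ((LSet m (oka a)).card : ℤ) := by
  unfold CA LSet
  norm_cast
  rw [Finset.filter_image]
  rw [Finset.card_image_of_injective _ (blocks_inj _)]
  congr 1
  apply Finset.filter_congr
  intro c _
  have hs := c.blocks_sum
  simp only [wt_eq_iff, Composition.length, oka]
  constructor
  · rintro ⟨h1, h2, h3, h4, h5⟩; exact ⟨⟨hs, h2, h3, h4, h5⟩, h1⟩
  · rintro ⟨⟨_, h2, h3, h4, h5⟩, h1⟩; exact ⟨h1, h2, h3, h4, h5⟩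

noncomputable def DD {k : ℕ} (a : Fin k → ℕ) (j : Fin k) : MvPowerSeries (Fin 5) ℤ :=
  fun m => ((LSet m (fun l => oka a l ∧ l.head? = some (a j))).card : ℤ)

lemma LSet_congr {m : Fin 5 →₀ ℕ} {P Q : List ℕ → Prop}
    (h : ∀ l, (∀ p ∈ l, 0 < p) → wt l = m → (P l ↔ Q l)) : LSet m P = LSet m Q := by
  ext l
  simp only [mem_LSet]
  exact and_congr_right fun h1 => and_congr_right fun h2 => h l h1 h2

lemma LSet_filter {m : Fin 5 →₀ ℕ} (P Q : List ℕ → Prop) [DecidablePred Q] :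
    (LSet m P).filter Q = LSet m (fun l => P l ∧ Q l) := by
  ext l
  simp only [Finset.mem_filter, mem_LSet]
  tauto

lemma LSet_card_split {m : Fin 5 →₀ ℕ} (P Q : List ℕ → Prop) :
    (LSet m P).card
      = (LSet m (fun l => P l ∧ Q l)).card + (LSet m (fun l => P l ∧ ¬ Q l)).card := by
  classical
  rw [← LSet_filter P Q, ← LSet_filter P (fun l => ¬ Q l)]
  exact (Finset.card_filter_add_card_filter_not (fun l => Q l)).symm

lemma LSet_card_fiber {k : ℕ} {a : Fin k → ℕ} (hinj : Function.Injective a)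
    {m : Fin 5 →₀ ℕ} (P : List ℕ → Prop) (g : List ℕ → ℕ)
    (hg : ∀ l, (∀ p ∈ l, 0 < p) → wt l = m → P l → ∃ j : Fin k, g l = a j) :
    (LSet m P).card = ∑ j : Fin k, (LSet m (fun l => P l ∧ g l = a j)).card := by
  have h1 : (LSet m P).card
      = ∑ b ∈ Finset.univ.image a, ((LSet m P).filter (fun l => g l = b)).card := by
    apply Finset.card_eq_sum_card_fiberwise
    intro l hl
    obtain ⟨hp, hw, hP⟩ := mem_LSet.1 hl
    obtain ⟨j, hj⟩ := hg l hp hw hP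
    simp only [Finset.mem_coe, Finset.mem_image, Finset.mem_univ, true_and]
    exact ⟨j, hj.symm⟩
  rw [h1, Finset.sum_image (fun i _ j _ h => hinj h)]
  exact Finset.sum_congr rfl fun j _ => by rw [LSet_filter]


lemma coeff_apply (m : Fin 5 →₀ ℕ) (F : MvPowerSeries (Fin 5) ℤ) :
    MvPowerSeries.coeff m F = F m := rfl

lemma E1 {k : ℕ} (a : Fin k → ℕ) (hmono : StrictMono a) :
    CA a = 1 + ∑ j : Fin k, DD a j := by
  ext1 m
  rw [map_add, map_sum, MvPowerSeries.coeff_one]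
  show CA a m = _
  rw [CA_eq]
  rw [LSet_card_split (oka a) (fun l => l = [])]
  have h1 : LSet m (fun l => oka a l ∧ l = []) = if m = 0 then {([] : List ℕ)} else ∅ := by
    split_ifs with hm
    · subst hm
      ext l
      simp only [mem_LSet, Finset.mem_singleton]
      constructor
      · rintro ⟨_, _, _, rfl⟩; rfl
      · rintro rfl
        exact ⟨by simp, wt_nil, fun p hp => by simp at hp, rfl⟩
    · ext l
      simp only [mem_LSet]
      constructor
      · rintro ⟨_, hw, _, rfl⟩
        exact absurd (by rw [← hw, wt_nil]) hm
      · intro h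
        exact absurd h (Finset.notMem_empty l)
  have h2 : (LSet m (fun l => oka a l ∧ ¬ l = [])).card
      = ∑ j : Fin k, (LSet m (fun l => oka a l ∧ l.head? = some (a j))).card := by
    rw [LSet_card_fiber hmono.injective _ (fun l => l.head?.getD 0)
      (fun l hp hw hP => by
        obtain ⟨j, hj⟩ := hP.1 _ (List.head_mem hP.2)
        exact ⟨j, by simp only [List.head?_eq_head hP.2, Option.getD_some, hj]⟩)]
    congr 1
    ext j
    congr 1
    apply LSet_congr
    intro l _ _
    constructor
    · rintro ⟨⟨ho, hne⟩, hh⟩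
      rw [List.head?_eq_head hne] at hh ⊢
      simp only [Option.getD_some] at hh
      rw [hh]
      exact ⟨ho, rfl⟩
    · rintro ⟨ho, hh⟩
      have hne : l ≠ [] := by rintro rfl; simp at hh
      refine ⟨⟨ho, hne⟩, ?_⟩
      rw [List.head?_eq_head hne] at hh
      rw [List.head?_eq_head hne]
      simp only [Option.getD_some]
      exact Option.some_injective _ hh
  rw [h1, h2]
  have hD : ∀ j : Fin k, (MvPowerSeries.coeff m) (DD a j)
      = ((LSet m (fun l => oka a l ∧ l.head? = some (a j))).card : ℤ) := fun j => rfl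
  simp only [hD]
  push_cast
  split_ifs <;> simp [add_comm]

noncomputable def sab {k : ℕ} (a : Fin k → ℕ) (j : Fin k) : Fin 5 →₀ ℕ :=
  Finsupp.single 0 (a j) + Finsupp.single 1 1

lemma bb_eq {k : ℕ} (a : Fin k → ℕ) (j : Fin k) :
    bb a j = MvPowerSeries.monomial (sab a j) 1 := by
  rw [bb, sab, MvPowerSeries.X_pow_eq, MvPowerSeries.X,
    MvPowerSeries.monomial_mul_monomial, one_mul]

lemma coeff_bb_mul {k : ℕ} (a : Fin k → ℕ) (j : Fin k) (F : MvPowerSeries (Fin 5) ℤ)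
    (m : Fin 5 →₀ ℕ) :
    MvPowerSeries.coeff m (bb a j * F)
      = if sab a j ≤ m then MvPowerSeries.coeff (m - sab a j) F else 0 := by
  rw [bb_eq, MvPowerSeries.coeff_monomial_mul]
  split_ifs <;> simp

lemma coeff_Xi_mul (i : Fin 5) (F : MvPowerSeries (Fin 5) ℤ) (m : Fin 5 →₀ ℕ) :
    MvPowerSeries.coeff m (MvPowerSeries.X i * F)
      = if Finsupp.single i 1 ≤ m then MvPowerSeries.coeff (m - Finsupp.single i 1) F
        else 0 := by
  rw [MvPowerSeries.X, MvPowerSeries.coeff_monomial_mul]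
  split_ifs <;> simp

/-- index of the variable marking the pair (head `a j`, second `a i`) -/
def eidx {k : ℕ} (j i : Fin k) : Fin 5 := if j < i then 2 else if j = i then 3 else 4

lemma wt_cons_idx {k : ℕ} {a : Fin k → ℕ} (hmono : StrictMono a) (j i : Fin k)
    (t : List ℕ) :
    wt (a j :: a i :: t) = sab a j + Finsupp.single (eidx j i) 1 + wt (a i :: t) := by
  rw [wt_cons, sab, eidx]
  rcases lt_trichotomy j i with h | h | h
  · rw [if_pos (hmono h), if_pos h]
  · subst h
    rw [if_neg (lt_irrefl _), if_pos rfl, if_neg (lt_irrefl _), if_pos rfl]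
  · rw [if_neg (by exact fun hc => absurd (hmono.lt_iff_lt.1 hc) (by omega)),
      if_neg (fun hc => absurd (hmono.injective hc) (by omega)),
      if_neg (by omega), if_neg (fun hc => by omega)]

lemma head?_cases {l : List ℕ} {p : ℕ} (h : l.head? = some p) : l = p :: l.tail := by
  cases l with
  | nil => simp at h
  | cons q t => simp_all

lemma card_tail {k : ℕ} (a : Fin k → ℕ) (hpos : ∀ i, 0 < a i) (hmono : StrictMono a)
    (m : Fin 5 →₀ ℕ) (j i : Fin k) (hs : sab a j ≤ m) :
    ((LSet m (fun l => oka a l ∧ l.head? = some (a j) ∧ l.tail.head? = some (a i))).card : ℤ)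
    = if Finsupp.single (eidx j i) 1 ≤ m - sab a j
      then ((LSet (m - sab a j - Finsupp.single (eidx j i) 1)
          (fun l => oka a l ∧ l.head? = some (a i))).card : ℤ)
      else 0 := by
  set e1 : Fin 5 →₀ ℕ := Finsupp.single (eidx j i) 1 with he1
  have shape : ∀ l ∈ LSet m (fun l => oka a l ∧ l.head? = some (a j)
      ∧ l.tail.head? = some (a i)), l = a j :: l.tail ∧ m = sab a j + e1 + wt l.tail := by
    intro l hl
    obtain ⟨hp, hw, ho, hh, ht⟩ := mem_LSet.1 hl
    have h1 : l = a j :: l.tail := head?_cases hh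
    have h2 : l.tail = a i :: l.tail.tail := head?_cases ht
    refine ⟨h1, ?_⟩
    rw [← hw]
    conv_lhs => rw [h1, h2]
    rw [wt_cons_idx hmono, ← h2]
  split_ifs with hle
  · norm_cast
    apply Finset.card_bij' (fun l _ => l.tail) (fun t _ => a j :: t)
    · intro l hl
      obtain ⟨hsh, hm⟩ := shape l hl
      obtain ⟨hp, hw, ho, hh, ht⟩ := mem_LSet.1 hl
      rw [mem_LSet]
      refine ⟨fun p hp' => hp p (by rw [hsh]; exact List.mem_cons_of_mem _ hp'), ?_,
        fun p hp' => ho p (by rw [hsh]; exact List.mem_cons_of_mem _ hp'), ht⟩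
      rw [hm, add_assoc, add_tsub_cancel_left, add_tsub_cancel_left]
    · intro t ht
      obtain ⟨hp, hw, ho, hh⟩ := mem_LSet.1 ht
      rw [mem_LSet]
      have hshape : t = a i :: t.tail := head?_cases hh
      have hwt : wt (a j :: t) = sab a j + e1 + wt t := by
        conv_lhs => rw [hshape]
        rw [wt_cons_idx hmono, ← hshape]
      refine ⟨?_, ?_, ?_, by simp, by rw [hshape]; simp⟩
      · intro p hp'
        rcases List.mem_cons.1 hp' with rfl | hp''
        · exact hpos j
        · exact hp p hp''
      · rw [hwt, hw, add_assoc, add_tsub_cancel_of_le hle, add_tsub_cancel_of_le hs]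
      · intro p hp'
        rcases List.mem_cons.1 hp' with rfl | hp''
        · exact ⟨j, rfl⟩
        · exact ho p hp''
    · intro l hl
      exact (shape l hl).1.symm
    · intro t _
      rfl
  · norm_cast
    rw [Finset.card_eq_zero]
    apply Finset.eq_empty_of_forall_notMem
    intro l hl
    obtain ⟨_, hm⟩ := shape l hl
    exact hle (by rw [hm, add_assoc, add_tsub_cancel_left]; exact le_add_right le_rfl)

lemma sab_le_wt {k : ℕ} (a : Fin k → ℕ) (j : Fin k) (t : List ℕ) :
    sab a j ≤ wt (a j :: t) := by
  cases t with
  | nil => rw [wt_single]; exact le_of_eq (by rw [sab])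
  | cons p t2 =>
      rw [wt_cons]
      exact le_add_right (le_add_right (le_of_eq (by rw [sab])))

lemma eidx_lt {k : ℕ} {j i : Fin k} (h : i < j) : eidx j i = 4 := by
  rw [eidx, if_neg (by omega), if_neg (by omega)]

lemma eidx_self {k : ℕ} (j : Fin k) : eidx j j = 3 := by
  rw [eidx, if_neg (lt_irrefl _), if_pos rfl]

lemma eidx_gt {k : ℕ} {j i : Fin k} (h : j < i) : eidx j i = 2 := by
  rw [eidx, if_pos h]

lemma E2 {k : ℕ} (a : Fin k → ℕ) (hpos : ∀ i, 0 < a i) (hmono : StrictMono a) (j : Fin k) :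
    DD a j = bb a j * (1
      + MvPowerSeries.X 4 * (∑ i ∈ Finset.univ.filter (· < j), DD a i)
      + MvPowerSeries.X 3 * DD a j
      + MvPowerSeries.X 2 * (∑ i ∈ Finset.univ.filter (j < ·), DD a i)) := by
  ext1 m
  rw [coeff_bb_mul]
  have hDD : ∀ (i : Fin k) (m'' : Fin 5 →₀ ℕ), MvPowerSeries.coeff m'' (DD a i)
      = ((LSet m'' (fun l => oka a l ∧ l.head? = some (a i))).card : ℤ) := fun _ _ => rfl
  rw [hDD]
  split_ifs with hs
  · -- main case
    set m' := m - sab a j with hm'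
    -- decompose the left-hand side
    rw [LSet_card_split (fun l => oka a l ∧ l.head? = some (a j)) (fun l => l.tail = [])]
    have hone : ((LSet m (fun l => (oka a l ∧ l.head? = some (a j)) ∧ l.tail = [])).card : ℤ)
        = if m' = 0 then 1 else 0 := by
      split_ifs with h0
      · have hm : m = sab a j := le_antisymm (tsub_eq_zero_iff_le.1 h0) hs
        have : LSet m (fun l => (oka a l ∧ l.head? = some (a j)) ∧ l.tail = []) = {[a j]} := by
          ext l
          simp only [mem_LSet, Finset.mem_singleton]
          constructor
          · rintro ⟨hp, hw, ⟨ho, hh⟩, ht⟩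
            have := head?_cases hh
            rw [ht] at this
            exact this
          · rintro rfl
            refine ⟨fun p hp => ?_, by rw [wt_single, hm, sab], ⟨fun p hp => ?_, rfl⟩, rfl⟩
            · rcases List.mem_singleton.1 hp with rfl; exact hpos j
            · rcases List.mem_singleton.1 hp with rfl; exact ⟨j, rfl⟩
        rw [this]; simp
      · have : LSet m (fun l => (oka a l ∧ l.head? = some (a j)) ∧ l.tail = []) = ∅ := by
          apply Finset.eq_empty_of_forall_notMem
          intro l hl
          obtain ⟨hp, hw, ⟨ho, hh⟩, ht⟩ := mem_LSet.1 hl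
          have hl1 : l = [a j] := by rw [head?_cases hh, ht]
          apply h0
          rw [hm', ← hw, hl1, wt_single, ← sab, tsub_self]
        rw [this]; simp
    have hrest : ((LSet m (fun l => (oka a l ∧ l.head? = some (a j)) ∧ ¬ l.tail = [])).card : ℤ)
        = ∑ i : Fin k, ((LSet m (fun l => oka a l ∧ l.head? = some (a j)
            ∧ l.tail.head? = some (a i))).card : ℤ) := by
      rw [LSet_card_fiber hmono.injective _ (fun l => l.tail.head?.getD 0)
        (fun l hp hw hP => by
          obtain ⟨⟨ho, hh⟩, ht⟩ := hP
          obtain ⟨i, hi⟩ := ho _ (by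
            rw [head?_cases hh]
            exact List.mem_cons_of_mem _ (List.head_mem ht))
          exact ⟨i, by simp only [List.head?_eq_head ht, Option.getD_some, hi]⟩)]
      push_cast
      refine Finset.sum_congr rfl fun i _ => ?_
      refine congrArg (fun n : ℕ => (n : ℤ)) (congrArg Finset.card (LSet_congr ?_))
      intro l _ _
      constructor
      · rintro ⟨⟨⟨ho, hh⟩, ht⟩, hg⟩
        refine ⟨ho, hh, ?_⟩
        rw [List.head?_eq_head ht] at hg ⊢
        simp only [Option.getD_some] at hg
        rw [hg]
      · rintro ⟨ho, hh, ht⟩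
        have hne : l.tail ≠ [] := by rintro h'; rw [h'] at ht; simp at ht
        refine ⟨⟨⟨ho, hh⟩, hne⟩, ?_⟩
        rw [List.head?_eq_head hne] at ht ⊢
        simp only [Option.getD_some]
        exact Option.some_injective _ ht
    push_cast
    rw [hone, hrest]
    have hterm : ∀ i : Fin k, ((LSet m (fun l => oka a l ∧ l.head? = some (a j)
        ∧ l.tail.head? = some (a i))).card : ℤ)
        = if Finsupp.single (eidx j i) 1 ≤ m'
          then MvPowerSeries.coeff (m' - Finsupp.single (eidx j i) 1) (DD a i) else 0 := by
      intro i
      rw [card_tail a hpos hmono m j i hs, hDD]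
    rw [Finset.sum_congr rfl (fun i _ => hterm i)]
    -- decompose the right-hand side
    rw [map_add, map_add, map_add, MvPowerSeries.coeff_one, coeff_Xi_mul, coeff_Xi_mul,
      coeff_Xi_mul, map_sum, map_sum]
    -- three-way split of the sum
    have hsplit : ∀ f : Fin k → ℤ, (∑ i : Fin k, f i)
        = (∑ i ∈ Finset.univ.filter (· < j), f i) + f j
          + (∑ i ∈ Finset.univ.filter (j < ·), f i) := by
      intro f
      rw [← Finset.sum_filter_add_sum_filter_not Finset.univ (· < j) f]
      have h1 : Finset.univ.filter (fun i : Fin k => ¬ i < j)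
          = insert j (Finset.univ.filter (j < ·)) := by
        ext i
        simp only [Finset.mem_filter, Finset.mem_univ, true_and, Finset.mem_insert]
        omega
      rw [h1, Finset.sum_insert (by simp)]
      ring
    rw [hsplit]
    have hpull : ∀ (c : Prop) (inst : Decidable c) (s : Finset (Fin k)) (g : Fin k → ℤ),
        (∑ i ∈ s, if c then g i else 0) = if c then ∑ i ∈ s, g i else 0 := by
      intro c inst s g
      split_ifs <;> simp
    have hr1 : (∑ i ∈ Finset.univ.filter (· < j),
        if Finsupp.single (eidx j i) 1 ≤ m'
          then MvPowerSeries.coeff (m' - Finsupp.single (eidx j i) 1) (DD a i) else 0)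
        = if Finsupp.single (4 : Fin 5) 1 ≤ m'
          then ∑ i ∈ Finset.univ.filter (· < j),
            MvPowerSeries.coeff (m' - Finsupp.single 4 1) (DD a i) else 0 := by
      rw [← hpull]
      refine Finset.sum_congr rfl fun i hi => ?_
      rw [eidx_lt (Finset.mem_filter.1 hi).2]
    have hr2 : (if Finsupp.single (eidx j j) 1 ≤ m'
          then MvPowerSeries.coeff (m' - Finsupp.single (eidx j j) 1) (DD a j) else 0)
        = if Finsupp.single (3 : Fin 5) 1 ≤ m'
          then MvPowerSeries.coeff (m' - Finsupp.single 3 1) (DD a j) else 0 := by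
      rw [eidx_self]
    have hr3 : (∑ i ∈ Finset.univ.filter (j < ·),
        if Finsupp.single (eidx j i) 1 ≤ m'
          then MvPowerSeries.coeff (m' - Finsupp.single (eidx j i) 1) (DD a i) else 0)
        = if Finsupp.single (2 : Fin 5) 1 ≤ m'
          then ∑ i ∈ Finset.univ.filter (j < ·),
            MvPowerSeries.coeff (m' - Finsupp.single 2 1) (DD a i) else 0 := by
      rw [← hpull]
      refine Finset.sum_congr rfl fun i hi => ?_
      rw [eidx_gt (Finset.mem_filter.1 hi).2]
    rw [hr1, hr2, hr3]
    ring
  · -- sab ≰ m : left-hand side is zero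
    norm_cast
    rw [Finset.card_eq_zero]
    apply Finset.eq_empty_of_forall_notMem
    intro l hl
    obtain ⟨hp, hw, ho, hh⟩ := mem_LSet.1 hl
    exact hs (hw ▸ (head?_cases hh ▸ sab_le_wt a j l.tail))

noncomputable def Tn {k : ℕ} (a : Fin k → ℕ) (n : ℕ) : MvPowerSeries (Fin 5) ℤ :=
  ∑ i ∈ Finset.univ.filter (fun i : Fin k => n ≤ i.val), DD a i

noncomputable def Pn {k : ℕ} (a : Fin k → ℕ) (n : ℕ) : MvPowerSeries (Fin 5) ℤ :=
  ∏ i ∈ Finset.univ.filter (fun i : Fin k => n ≤ i.val),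
    (1 - bb a i * (MvPowerSeries.X 3 - MvPowerSeries.X 4))

noncomputable def Sn {k : ℕ} (a : Fin k → ℕ) (n : ℕ) : MvPowerSeries (Fin 5) ℤ :=
  ∑ t ∈ Finset.univ.filter (fun t : Fin k => n ≤ t.val), bb a t
    * (∏ i ∈ Finset.univ.filter (fun i : Fin k => n ≤ i.val ∧ i < t),
        (1 - bb a i * (MvPowerSeries.X 3 - MvPowerSeries.X 2)))
    * (∏ i ∈ Finset.univ.filter (t < ·),
        (1 - bb a i * (MvPowerSeries.X 3 - MvPowerSeries.X 4)))

lemma sum_split {k : ℕ} (j : Fin k) {M : Type*} [AddCommMonoid M] (f : Fin k → M) :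
    ∑ i : Fin k, f i = (∑ i ∈ Finset.univ.filter (· < j), f i) + f j
      + (∑ i ∈ Finset.univ.filter (j < ·), f i) := by
  rw [← Finset.sum_filter_add_sum_filter_not Finset.univ (· < j) f]
  have h1 : Finset.univ.filter (fun i : Fin k => ¬ i < j)
      = insert j (Finset.univ.filter (j < ·)) := by
    ext i
    simp only [Finset.mem_filter, Finset.mem_univ, true_and, Finset.mem_insert]
    omega
  rw [h1, Finset.sum_insert (by simp), add_assoc]

lemma E2' {k : ℕ} (a : Fin k → ℕ) (hpos : ∀ i, 0 < a i) (hmono : StrictMono a) (j : Fin k) :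
    DD a j * (1 - bb a j * (MvPowerSeries.X 3 - MvPowerSeries.X 4))
      = bb a j * (1 + MvPowerSeries.X 4 * Tn a 0)
        + bb a j * (MvPowerSeries.X 2 - MvPowerSeries.X 4)
            * (∑ i ∈ Finset.univ.filter (j < ·), DD a i) := by
  have h := E2 a hpos hmono j
  have hsum : Tn a 0 = (∑ i ∈ Finset.univ.filter (· < j), DD a i) + DD a j
      + (∑ i ∈ Finset.univ.filter (j < ·), DD a i) := by
    rw [Tn]
    rw [show Finset.univ.filter (fun i : Fin k => 0 ≤ i.val) = Finset.univ by
      apply Finset.filter_true_of_mem; intros; omega]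
    exact sum_split j _
  linear_combination h - bb a j * MvPowerSeries.X 4 * hsum

lemma filter_ge_eq_empty {k : ℕ} (n : ℕ) (hn : k ≤ n) :
    Finset.univ.filter (fun i : Fin k => n ≤ i.val) = ∅ := by
  apply Finset.eq_empty_of_forall_notMem
  intro i hi
  have := i.isLt
  simp only [Finset.mem_filter] at hi
  omega

lemma filter_ge_insert {k : ℕ} (n : ℕ) (hn : n < k) :
    Finset.univ.filter (fun i : Fin k => n ≤ i.val)
      = insert ⟨n, hn⟩ (Finset.univ.filter (fun i : Fin k => n + 1 ≤ i.val)) := by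
  ext i
  simp only [Finset.mem_filter, Finset.mem_univ, true_and, Finset.mem_insert, Fin.ext_iff]
  omega

lemma filter_gt_eq {k : ℕ} (n : ℕ) (hn : n < k) :
    Finset.univ.filter (fun i : Fin k => (⟨n, hn⟩ : Fin k) < i)
      = Finset.univ.filter (fun i : Fin k => n + 1 ≤ i.val) := by
  ext i
  simp only [Finset.mem_filter, Finset.mem_univ, true_and, Fin.lt_def]
  omega

lemma filter_ge_lt_empty {k : ℕ} (n : ℕ) (hk : n < k) :
    Finset.univ.filter (fun i : Fin k => n ≤ i.val ∧ i < (⟨n, hk⟩ : Fin k)) = ∅ := by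
  apply Finset.eq_empty_of_forall_notMem
  intro i hi
  simp only [Finset.mem_filter, Finset.mem_univ, true_and, Fin.lt_def] at hi
  omega

lemma filter_ge_lt_insert {k n : ℕ} (hk : n < k) (t : Fin k) (ht : n + 1 ≤ t.val) :
    Finset.univ.filter (fun i : Fin k => n ≤ i.val ∧ i < t)
      = insert ⟨n, hk⟩ (Finset.univ.filter (fun i : Fin k => n + 1 ≤ i.val ∧ i < t)) := by
  ext i
  simp only [Finset.mem_filter, Finset.mem_univ, true_and, Finset.mem_insert, Fin.ext_iff,
    Fin.lt_def]
  omega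

lemma key {k : ℕ} (a : Fin k → ℕ) (hpos : ∀ i, 0 < a i) (hmono : StrictMono a) :
    ∀ c n : ℕ, k ≤ n + c → Tn a n * Pn a n = (1 + MvPowerSeries.X 4 * Tn a 0) * Sn a n := by
  intro c
  induction c with
  | zero =>
      intro n hn
      rw [Tn, Sn, filter_ge_eq_empty n (by omega), Finset.sum_empty, Finset.sum_empty,
        zero_mul, mul_zero]
  | succ c ih =>
      intro n hn
      by_cases hk : k ≤ n
      · rw [Tn, Sn, filter_ge_eq_empty n hk, Finset.sum_empty, Finset.sum_empty, zero_mul,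
          mul_zero]
      · push_neg at hk
        have hT : Tn a n = DD a ⟨n, hk⟩ + Tn a (n + 1) := by
          rw [Tn, Tn, filter_ge_insert n hk, Finset.sum_insert (by simp)]
        have hP : Pn a n = (1 - bb a ⟨n, hk⟩ * (MvPowerSeries.X 3 - MvPowerSeries.X 4))
            * Pn a (n + 1) := by
          rw [Pn, Pn, filter_ge_insert n hk, Finset.prod_insert (by simp)]
        have hS : Sn a n = bb a ⟨n, hk⟩ * Pn a (n + 1)
            + (1 - bb a ⟨n, hk⟩ * (MvPowerSeries.X 3 - MvPowerSeries.X 2))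
              * Sn a (n + 1) := by
          rw [Sn, filter_ge_insert n hk, Finset.sum_insert (by simp)]
          congr 1
          · rw [filter_ge_lt_empty n hk, Finset.prod_empty, mul_one, filter_gt_eq n hk, Pn]
          · rw [Sn, Finset.mul_sum]
            refine Finset.sum_congr rfl fun t ht => ?_
            simp only [Finset.mem_filter, Finset.mem_univ, true_and] at ht
            rw [filter_ge_lt_insert hk t ht, Finset.prod_insert (by simp)]
            ring
        have hE := E2' a hpos hmono ⟨n, hk⟩
        rw [filter_gt_eq n hk] at hE
        have hTn1 : (∑ i ∈ Finset.univ.filter (fun i : Fin k => n + 1 ≤ i.val), DD a i)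
            = Tn a (n + 1) := rfl
        rw [hTn1] at hE
        have hih := ih (n + 1) (by omega)
        rw [hT, hP, hS]
        linear_combination Pn a (n + 1) * hE
          + (1 - bb a ⟨n, hk⟩ * (MvPowerSeries.X 3 - MvPowerSeries.X 2)) * hih

theorem stmt0 {k : ℕ} (hk : 1 ≤ k) (a : Fin k → ℕ) (hpos : ∀ i, 0 < a i)
    (hmono : StrictMono a) :
    CA a * ((∏ j : Fin k, (1 - bb a j * (MvPowerSeries.X 3 - MvPowerSeries.X 4)))
        - MvPowerSeries.X 4 * ∑ j : Fin k, bb a j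
            * (∏ i ∈ Finset.univ.filter (· < j),
                (1 - bb a i * (MvPowerSeries.X 3 - MvPowerSeries.X 2)))
            * (∏ i ∈ Finset.univ.filter (j < ·),
                (1 - bb a i * (MvPowerSeries.X 3 - MvPowerSeries.X 4))))
    = (∏ j : Fin k, (1 - bb a j * (MvPowerSeries.X 3 - MvPowerSeries.X 4)))
      + (1 - MvPowerSeries.X 4) * ∑ j : Fin k, bb a j
          * (∏ i ∈ Finset.univ.filter (· < j),
              (1 - bb a i * (MvPowerSeries.X 3 - MvPowerSeries.X 2)))
          * (∏ i ∈ Finset.univ.filter (j < ·),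
              (1 - bb a i * (MvPowerSeries.X 3 - MvPowerSeries.X 4))) := by
  have hkey := key a hpos hmono k 0 (by omega)
  have huniv : Finset.univ.filter (fun i : Fin k => 0 ≤ i.val) = Finset.univ :=
    Finset.filter_true_of_mem (fun _ _ => by omega)
  have hT0 : Tn a 0 = ∑ j : Fin k, DD a j := by rw [Tn, huniv]
  have hP0 : Pn a 0
      = ∏ j : Fin k, (1 - bb a j * (MvPowerSeries.X 3 - MvPowerSeries.X 4)) := by
    rw [Pn, huniv]
  have hS0 : Sn a 0 = ∑ j : Fin k, bb a j
      * (∏ i ∈ Finset.univ.filter (· < j),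
          (1 - bb a i * (MvPowerSeries.X 3 - MvPowerSeries.X 2)))
      * (∏ i ∈ Finset.univ.filter (j < ·),
          (1 - bb a i * (MvPowerSeries.X 3 - MvPowerSeries.X 4))) := by
    rw [Sn, huniv]
    refine Finset.sum_congr rfl fun t _ => ?_
    rw [show Finset.univ.filter (fun i : Fin k => 0 ≤ i.val ∧ i < t)
        = Finset.univ.filter (· < t) from by ext i; simp]
  rw [hT0, hP0, hS0] at hkey
  have h1 := E1 a hmono
  linear_combination ((∏ j : Fin k, (1 - bb a j * (MvPowerSeries.X 3 - MvPowerSeries.X 4)))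
      - MvPowerSeries.X 4 * ∑ j : Fin k, bb a j
          * (∏ i ∈ Finset.univ.filter (· < j),
              (1 - bb a i * (MvPowerSeries.X 3 - MvPowerSeries.X 2)))
          * (∏ i ∈ Finset.univ.filter (j < ·),
              (1 - bb a i * (MvPowerSeries.X 3 - MvPowerSeries.X 4)))) * h1 + hkey
end

section
/- Let k ≥ 1 and let a_1 < a_2 < … < a_k be positive integers, A = {a_1,…,a_k}. In ℤ[[x,y]], ∑_{n≥0} ∑_{σ∈C_n^A} rises(σ)·x^n·y^{parts(σ)} = ( ∑_{1≤i<j≤k} x^{a_i+a_j} ) · ∑_{m≥0} (m+1)·( ∑_{j=1}^k x^{a_j} )^m · y^{m+2}, and the same identity holds with drops(σ) in place of rises(σ). -/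
open scoped Classical

/-- `∑_{n≥0} ∑_{σ∈C_n^A} rises(σ) x^n y^{parts(σ)}` as an element of
`ℤ[[x]][[y]]` (the outer variable is `y`, the inner one is `x`). -/
noncomputable def risesGF {k : ℕ} (a : Fin k → ℕ) : PowerSeries (PowerSeries ℤ) :=
  PowerSeries.mk fun p => PowerSeries.mk fun n =>
    ((∑ c ∈ Finset.univ.filter (fun c : Composition n =>
        (∀ b ∈ c.blocks, ∃ i, a i = b) ∧ c.length = p), risesL c.blocks : ℕ) : ℤ)

/-- `∑_{n≥0} ∑_{σ∈C_n^A} drops(σ) x^n y^{parts(σ)}` as an element of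
`ℤ[[x]][[y]]`. -/
noncomputable def dropsGF {k : ℕ} (a : Fin k → ℕ) : PowerSeries (PowerSeries ℤ) :=
  PowerSeries.mk fun p => PowerSeries.mk fun n =>
    ((∑ c ∈ Finset.univ.filter (fun c : Composition n =>
        (∀ b ∈ c.blocks, ∃ i, a i = b) ∧ c.length = p), dropsL c.blocks : ℕ) : ℤ)

/-- `(∑_{i<j} x^{a_i+a_j}) · ∑_{m≥0} (m+1) (∑_j x^{a_j})^m y^{m+2}` as an
element of `ℤ[[x]][[y]]`: the coefficient of `y^t` for `t = m+2 ≥ 2` is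
`(m+1) (∑_j x^{a_j})^m (∑_{i<j} x^{a_i+a_j})`. -/
noncomputable def rhsGF {k : ℕ} (a : Fin k → ℕ) : PowerSeries (PowerSeries ℤ) :=
  (PowerSeries.C : PowerSeries ℤ →+* PowerSeries (PowerSeries ℤ))
      (∑ j : Fin k, ∑ i ∈ Finset.univ.filter (· < j),
        (PowerSeries.X : PowerSeries ℤ) ^ (a i + a j))
    * PowerSeries.mk (fun t => if 2 ≤ t then
        ((t - 1 : ℕ) : PowerSeries ℤ)
          * (∑ j : Fin k, (PowerSeries.X : PowerSeries ℤ) ^ (a j)) ^ (t - 2) else 0)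

namespace Stmt4Aux

open PowerSeries Finset

/-- count adjacent pairs satisfying `q` -/
def adjC (q : ℕ × ℕ → Bool) (l : List ℕ) : ℕ := (l.zip l.tail).countP q

lemma adjC_short (q : ℕ × ℕ → Bool) (l : List ℕ) (h : l.length ≤ 1) : adjC q l = 0 := by
  match l, h with
  | [], _ => rfl
  | [x], _ => rfl

lemma adjC_cons2 (q : ℕ × ℕ → Bool) (x y : ℕ) (t : List ℕ) :
    adjC q (x :: y :: t) = (if q (x, y) then 1 else 0) + adjC q (y :: t) := by
  simp only [adjC, List.zip_cons_cons, List.tail_cons, List.countP_cons]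
  omega

variable {k : ℕ} (a : Fin k → ℕ)

noncomputable def Sg : PowerSeries ℤ := ∑ j : Fin k, (PowerSeries.X : PowerSeries ℤ) ^ (a j)

noncomputable def Tq (q : ℕ × ℕ → Bool) : PowerSeries ℤ :=
  ∑ x : Fin k, ∑ y : Fin k,
    (if q (a x, a y) then 1 else 0 : PowerSeries ℤ) * PowerSeries.X ^ (a x + a y)

noncomputable def GFq (q : ℕ × ℕ → Bool) (p : ℕ) : PowerSeries ℤ :=
  ∑ f : Fin p → Fin k,
    PowerSeries.C ((adjC q (List.ofFn fun t => a (f t)) : ℕ) : ℤ) *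
      PowerSeries.X ^ (∑ t, a (f t))

lemma sum_pi_succ {M : Type} [AddCommMonoid M] (p : ℕ) (F : (Fin (p + 1) → Fin k) → M) :
    ∑ f : Fin (p + 1) → Fin k, F f
      = ∑ x : Fin k, ∑ g : Fin p → Fin k, F (Fin.cons (α := fun _ => Fin k) x g) := by
  rw [← (Fin.consEquiv (fun _ : Fin (p+1) => Fin k)).sum_comp F]
  rw [Fintype.sum_prod_type]
  rfl

lemma wt_cons (p : ℕ) (x : Fin k) (g : Fin p → Fin k) :
    (∑ t : Fin (p+1), a (Fin.cons (α := fun _ => Fin k) x g t))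
      = a x + ∑ t : Fin p, a (g t) := by
  rw [Fin.sum_univ_succ]
  simp

lemma Sg_pow (p : ℕ) :
    ∑ f : Fin p → Fin k, (PowerSeries.X : PowerSeries ℤ) ^ (∑ t, a (f t)) = Sg a ^ p := by
  induction p with
  | zero => simp [Sg]
  | succ p ih =>
    rw [sum_pi_succ]
    have : ∀ x : Fin k, ∀ g : Fin p → Fin k,
        (PowerSeries.X : PowerSeries ℤ)
            ^ (∑ t : Fin (p+1), a (Fin.cons (α := fun _ => Fin k) x g t))
          = PowerSeries.X ^ (a x) * PowerSeries.X ^ (∑ t : Fin p, a (g t)) := by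
      intro x g; rw [wt_cons, pow_add]
    simp only [this, ← Finset.mul_sum, ih]
    rw [pow_succ, Sg, Finset.mul_sum]
    exact Finset.sum_congr rfl fun x _ => mul_comm _ _

lemma ofFn_cons_a (p : ℕ) (x : Fin k) (g : Fin p → Fin k) :
    (List.ofFn fun t : Fin (p+1) => a (Fin.cons (α := fun _ => Fin k) x g t))
      = a x :: List.ofFn fun t => a (g t) := by
  rw [List.ofFn_succ]
  simp

lemma GFq_one (q : ℕ × ℕ → Bool) : GFq a q 1 = 0 := by
  unfold GFq
  apply Finset.sum_eq_zero
  intro f _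
  rw [adjC_short q _ (by simp)]
  simp

lemma GFq_step (q : ℕ × ℕ → Bool) (p : ℕ) :
    GFq a q (p + 2) = Sg a * GFq a q (p + 1) + Tq a q * Sg a ^ p := by
  unfold GFq
  rw [sum_pi_succ]
  have key : ∀ x : Fin k, ∀ g : Fin (p+1) → Fin k,
      PowerSeries.C
          ((adjC q (List.ofFn fun t : Fin (p+2) =>
            a (Fin.cons (α := fun _ => Fin k) x g t)) : ℕ) : ℤ) *
        PowerSeries.X ^ (∑ t : Fin (p+2), a (Fin.cons (α := fun _ => Fin k) x g t))
      = ((if q (a x, a (g 0)) then 1 else 0 : PowerSeries ℤ)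
          + PowerSeries.C ((adjC q (List.ofFn fun t => a (g t)) : ℕ) : ℤ))
        * (PowerSeries.X ^ (a x) * PowerSeries.X ^ (∑ t : Fin (p+1), a (g t))) := by
    intro x g
    rw [wt_cons, pow_add, ofFn_cons_a]
    have hofg : (List.ofFn fun t : Fin (p+1) => a (g t))
        = a (g 0) :: List.ofFn fun t : Fin p => a (g t.succ) := by
      rw [List.ofFn_succ]
    rw [hofg, adjC_cons2, ← hofg]
    push_cast
    by_cases h : q (a x, a (g 0)) <;> simp [h] <;> ring
  simp only [key]
  clear key
  have split : ∀ x : Fin k, ∀ g : Fin (p+1) → Fin k,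
      ((if q (a x, a (g 0)) then 1 else 0 : PowerSeries ℤ)
          + PowerSeries.C ((adjC q (List.ofFn fun t => a (g t)) : ℕ) : ℤ))
        * (PowerSeries.X ^ (a x) * PowerSeries.X ^ (∑ t : Fin (p+1), a (g t)))
      = (if q (a x, a (g 0)) then 1 else 0 : PowerSeries ℤ)
          * (PowerSeries.X ^ (a x) * PowerSeries.X ^ (∑ t : Fin (p+1), a (g t)))
        + PowerSeries.X ^ (a x)
          * (PowerSeries.C ((adjC q (List.ofFn fun t => a (g t)) : ℕ) : ℤ)
            * PowerSeries.X ^ (∑ t : Fin (p+1), a (g t))) := by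
    intro x g; ring
  simp only [split, Finset.sum_add_distrib]
  clear split
  rw [add_comm (Sg a * _)]
  congr 1
  · have inner : ∀ x : Fin k,
        (∑ g : Fin (p+1) → Fin k,
          (if q (a x, a (g 0)) then 1 else 0 : PowerSeries ℤ)
            * (PowerSeries.X ^ (a x) * PowerSeries.X ^ (∑ t : Fin (p+1), a (g t))))
        = ∑ y : Fin k,
            (if q (a x, a y) then 1 else 0 : PowerSeries ℤ) * PowerSeries.X ^ (a x + a y)
              * ∑ h : Fin p → Fin k, PowerSeries.X ^ (∑ t : Fin p, a (h t)) := by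
      intro x
      rw [sum_pi_succ]
      congr 1; funext y
      rw [Finset.mul_sum]
      congr 1; funext h
      rw [wt_cons]
      simp only [Fin.cons_zero]
      rw [pow_add, pow_add]
      ring
    simp only [inner, Sg_pow]
    simp only [Tq, Finset.sum_mul]
  · rw [Sg, Finset.sum_mul]
    apply Finset.sum_congr rfl
    intro x _
    rw [Finset.mul_sum]

lemma GFq_formula (q : ℕ × ℕ → Bool) (p : ℕ) :
    GFq a q (p + 2) = ((p + 1 : ℕ) : PowerSeries ℤ) * Tq a q * Sg a ^ p := by
  induction p with
  | zero => rw [GFq_step, GFq_one]; push_cast; ring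
  | succ p ih => rw [GFq_step, ih]; push_cast; ring

lemma Tq_rises (hmono : StrictMono a) :
    Tq a (fun pr => decide (pr.1 < pr.2))
      = ∑ j : Fin k, ∑ i ∈ Finset.univ.filter (· < j),
          (PowerSeries.X : PowerSeries ℤ) ^ (a i + a j) := by
  unfold Tq
  rw [Finset.sum_comm]
  apply Finset.sum_congr rfl
  intro y _
  rw [Finset.sum_filter]
  apply Finset.sum_congr rfl
  intro x _
  simp only [decide_eq_true_eq, hmono.lt_iff_lt, ite_mul, one_mul, zero_mul]

lemma Tq_drops (hmono : StrictMono a) :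
    Tq a (fun pr => decide (pr.2 < pr.1))
      = ∑ j : Fin k, ∑ i ∈ Finset.univ.filter (· < j),
          (PowerSeries.X : PowerSeries ℤ) ^ (a i + a j) := by
  unfold Tq
  apply Finset.sum_congr rfl
  intro x _
  rw [Finset.sum_filter]
  apply Finset.sum_congr rfl
  intro y _
  simp only [decide_eq_true_eq, hmono.lt_iff_lt, ite_mul, one_mul, zero_mul,
    Nat.add_comm (a x) (a y)]

lemma sum_comp_eq (hpos : ∀ i, 0 < a i) (hinj : Function.Injective a)
    (G : List ℕ → ℕ) (p n : ℕ) :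
    ∑ c ∈ Finset.univ.filter (fun c : Composition n =>
        (∀ b ∈ c.blocks, ∃ i, a i = b) ∧ c.length = p), (G c.blocks : ℤ)
    = ∑ f ∈ Finset.univ.filter (fun f : Fin p → Fin k => ∑ t, a (f t) = n),
        (G (List.ofFn fun t => a (f t)) : ℤ) := by
  symm
  apply Finset.sum_bij
    (i := fun f hf => (⟨List.ofFn fun t => a (f t),
      by intro b hb
         rw [List.mem_ofFn] at hb
         obtain ⟨t, rfl⟩ := hb
         exact hpos _,
      by rw [List.sum_ofFn]
         exact (Finset.mem_filter.mp hf).2⟩ : Composition n))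
  · intro f hf
    rw [Finset.mem_filter]
    refine ⟨Finset.mem_univ _, ?_, ?_⟩
    · intro b hb
      rw [List.mem_ofFn] at hb
      obtain ⟨t, rfl⟩ := hb
      exact ⟨f t, rfl⟩
    · simp [Composition.length]
  · intro f1 h1 f2 h2 he
    have : (List.ofFn fun t => a (f1 t)) = List.ofFn fun t => a (f2 t) :=
      congrArg Composition.blocks he
    rw [List.ofFn_inj] at this
    funext t
    exact hinj (congrFun this t)
  · intro c hc
    rw [Finset.mem_filter] at hc
    obtain ⟨-, h1, h2⟩ := hc
    have hlen : c.blocks.length = p := c.blocks_length.trans h2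
    set f : Fin p → Fin k := fun t =>
      (h1 (c.blocks.get (Fin.cast hlen.symm t)) (c.blocks.get_mem _)).choose with hf
    have hfa : ∀ t : Fin p, a (f t) = c.blocks.get (Fin.cast hlen.symm t) := fun t =>
      (h1 (c.blocks.get (Fin.cast hlen.symm t)) (c.blocks.get_mem _)).choose_spec
    have hblocks : (List.ofFn fun t => a (f t)) = c.blocks := by
      apply List.ext_get
      · simp [hlen]
      · intro i hi1 hi2
        rw [List.get_ofFn]
        rw [hfa]
        rfl
    refine ⟨f, ?_, ?_⟩
    · rw [Finset.mem_filter]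
      refine ⟨Finset.mem_univ _, ?_⟩
      rw [← List.sum_ofFn, hblocks]
      exact c.blocks_sum
    · exact Composition.ext hblocks
  · intro f hf
    rfl

lemma mk_eq (q : ℕ × ℕ → Bool) (p : ℕ)
    (hpos : ∀ i, 0 < a i) (hinj : Function.Injective a) :
    (PowerSeries.mk fun n : ℕ =>
        ((∑ c ∈ Finset.univ.filter (fun c : Composition n =>
          (∀ b ∈ c.blocks, ∃ i, a i = b) ∧ c.length = p), adjC q c.blocks : ℕ) : ℤ))
      = GFq a q p := by
  ext n
  rw [PowerSeries.coeff_mk, GFq, map_sum]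
  simp only [PowerSeries.coeff_C_mul, PowerSeries.coeff_X_pow, mul_ite, mul_one, mul_zero]
  rw [← Finset.sum_filter]
  push_cast
  rw [sum_comp_eq a hpos hinj (adjC q) p n]
  apply Finset.sum_congr
  · apply Finset.filter_congr
    intro f _
    simp [eq_comm]
  · intros; rfl

lemma main (q : ℕ × ℕ → Bool) (hpos : ∀ i, 0 < a i) (hmono : StrictMono a)
    (hT : Tq a q = ∑ j : Fin k, ∑ i ∈ Finset.univ.filter (· < j),
        (PowerSeries.X : PowerSeries ℤ) ^ (a i + a j)) :
    (PowerSeries.mk fun p => PowerSeries.mk fun n =>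
      ((∑ c ∈ Finset.univ.filter (fun c : Composition n =>
          (∀ b ∈ c.blocks, ∃ i, a i = b) ∧ c.length = p), adjC q c.blocks : ℕ) : ℤ))
      = rhsGF a := by
  apply PowerSeries.ext
  intro p
  rw [PowerSeries.coeff_mk, rhsGF, PowerSeries.coeff_C_mul, PowerSeries.coeff_mk]
  have hzero : ∀ p' : ℕ, p' ≤ 1 →
      (PowerSeries.mk fun n : ℕ =>
        ((∑ c ∈ Finset.univ.filter (fun c : Composition n =>
          (∀ b ∈ c.blocks, ∃ i, a i = b) ∧ c.length = p'), adjC q c.blocks : ℕ) : ℤ))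
      = 0 := by
    intro p' hp
    ext n
    rw [PowerSeries.coeff_mk, map_zero]
    norm_cast
    apply Finset.sum_eq_zero
    intro c hc
    rw [Finset.mem_filter] at hc
    rw [adjC_short]
    rw [c.blocks_length.trans hc.2.2]
    exact hp
  match p with
  | 0 =>
    rw [hzero 0 (by norm_num), if_neg (by norm_num), mul_zero]
  | 1 =>
    rw [hzero 1 (by norm_num), if_neg (by norm_num), mul_zero]
  | (m+2) =>
    rw [mk_eq a q _ hpos hmono.injective, GFq_formula, hT]
    rw [if_pos (by omega)]
    have h1 : m + 2 - 1 = m + 1 := rfl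
    have h2 : m + 2 - 2 = m := rfl
    rw [h1, h2]
    rw [show Sg a = ∑ j : Fin k, (PowerSeries.X : PowerSeries ℤ) ^ (a j) from rfl]
    ring

end Stmt4Aux


theorem stmt4 {k : ℕ} (hk : 1 ≤ k) (a : Fin k → ℕ) (hpos : ∀ i, 0 < a i)
    (hmono : StrictMono a) :
    risesGF a = rhsGF a ∧ dropsGF a = rhsGF a := by
  constructor
  · exact Stmt4Aux.main a (fun pr => decide (pr.1 < pr.2)) hpos hmono
      (Stmt4Aux.Tq_rises a hmono)
  · exact Stmt4Aux.main a (fun pr => decide (pr.2 < pr.1)) hpos hmono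
      (Stmt4Aux.Tq_drops a hmono)
end

section
/- For every integer n ≥ 3, the total number of rises over all compositions of n with parts in ℕ⁺ (all positive integers allowed as parts) satisfies 9 · ∑_{σ∈C_n^{ℕ⁺}} rises(σ) = 2^{n−2}·(3n−5) + (−1)^{n+1}, as an identity of integers. -/
open Finset

def compositionBlocks (n : ℕ) : Finset (List ℕ) :=
  univ.map ⟨Composition.blocks (n := n), fun _ _ => Composition.ext⟩

def incHead (l : List ℕ) : List ℕ := (l.headI + 1) :: l.tail

def incHeadTwo (l : List ℕ) : List ℕ := (l.headI + 1) :: incHead l.tail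

@[simp]
theorem incHead_cons (a : ℕ) (t : List ℕ) : incHead (a :: t) = (a + 1) :: t := rfl

@[simp]
theorem incHeadTwo_cons_cons (a b : ℕ) (t : List ℕ) :
    incHeadTwo (a :: b :: t) = (a + 1) :: (b + 1) :: t := rfl

section CompositionBlocks

variable {n : ℕ} {l : List ℕ}

theorem mem_compositionBlocks : l ∈ compositionBlocks n ↔ l.sum = n ∧ ∀ x ∈ l, 0 < x := by
  simp only [compositionBlocks, mem_map, mem_univ, true_and]
  constructor
  · rintro ⟨c, rfl⟩
    exact ⟨c.blocks_sum, fun _ => c.blocks_pos⟩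
  · rintro ⟨hsum, hpos⟩
    exact ⟨⟨l, hpos _, hsum⟩, rfl⟩

theorem sum_compositionBlocks {M : Type*} [AddCommMonoid M] (f : List ℕ → M) :
    ∑ l ∈ compositionBlocks n, f l = ∑ c : Composition n, f c.blocks :=
  sum_map _ _ _

theorem card_compositionBlocks : #(compositionBlocks n) = 2 ^ (n - 1) := by
  simp [compositionBlocks, composition_card]

theorem ne_nil_of_mem_compositionBlocks (hl : l ∈ compositionBlocks (n + 1)) : l ≠ [] := by
  rintro rfl
  simp [mem_compositionBlocks] at hl

theorem one_le_headI_of_mem_compositionBlocks (hl : l ∈ compositionBlocks (n + 1)) :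
    1 ≤ l.headI := by
  obtain ⟨a, t, rfl⟩ := List.exists_cons_of_ne_nil (ne_nil_of_mem_compositionBlocks hl)
  exact (mem_compositionBlocks.1 hl).2 a List.mem_cons_self

theorem compositionBlocks_one : compositionBlocks 1 = {[1]} := by
  ext l
  simp only [mem_compositionBlocks, mem_singleton]
  constructor
  · rintro ⟨hsum, hpos⟩
    obtain _ | ⟨a, _ | ⟨b, t⟩⟩ := l
    · simp at hsum
    · simpa using hsum
    · simp only [List.sum_cons, List.forall_mem_cons] at hsum hpos
      omega
  · rintro rfl
    simp

theorem compositionBlocks_add_two :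
    compositionBlocks (n + 2) =
      (compositionBlocks (n + 1)).image (1 :: ·) ∪
        (compositionBlocks (n + 1)).image incHead := by
  ext l
  simp only [mem_union, mem_image, mem_compositionBlocks]
  constructor
  · rintro ⟨hsum, hpos⟩
    obtain _ | ⟨a, t⟩ := l
    · simp at hsum
    rw [List.sum_cons] at hsum
    rw [List.forall_mem_cons] at hpos
    rcases (by omega : a = 1 ∨ 2 ≤ a) with rfl | ha
    · exact Or.inl ⟨t, ⟨by omega, hpos.2⟩, rfl⟩
    · refine Or.inr ⟨(a - 1) :: t, ⟨?_, List.forall_mem_cons.2 ⟨by omega, hpos.2⟩⟩, ?_⟩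
      · rw [List.sum_cons]
        omega
      · rw [incHead_cons, Nat.sub_add_cancel (by omega)]
  · rintro (⟨t, ⟨hsum, hpos⟩, rfl⟩ | ⟨t, ⟨hsum, hpos⟩, rfl⟩)
    · exact ⟨by rw [List.sum_cons, hsum]; omega, List.forall_mem_cons.2 ⟨one_pos, hpos⟩⟩
    · obtain _ | ⟨a, t⟩ := t
      · simp at hsum
      rw [List.sum_cons] at hsum
      rw [incHead_cons, List.sum_cons, List.forall_mem_cons]
      exact ⟨by omega, a.succ_pos, fun x hx => hpos x (List.mem_cons_of_mem a hx)⟩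

theorem sum_compositionBlocks_add_two {M : Type*} [AddCommMonoid M] (f : List ℕ → M) :
    ∑ l ∈ compositionBlocks (n + 2), f l =
      ∑ l ∈ compositionBlocks (n + 1), f (1 :: l) +
        ∑ l ∈ compositionBlocks (n + 1), f (incHead l) := by
  have hdisj : Disjoint ((compositionBlocks (n + 1)).image (1 :: ·))
      ((compositionBlocks (n + 1)).image incHead) := by
    simp only [disjoint_left, mem_image]
    rintro _ ⟨s, _, rfl⟩ ⟨t, ht, heq⟩
    have := one_le_headI_of_mem_compositionBlocks ht
    simp only [incHead, List.cons.injEq] at heq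
    omega
  have hinj : Set.InjOn incHead (compositionBlocks (n + 1)) := by
    intro s hs t ht heq
    obtain ⟨a, s, rfl⟩ := List.exists_cons_of_ne_nil (ne_nil_of_mem_compositionBlocks hs)
    obtain ⟨b, t, rfl⟩ := List.exists_cons_of_ne_nil (ne_nil_of_mem_compositionBlocks ht)
    simpa using heq
  rw [compositionBlocks_add_two, sum_union hdisj, sum_image (List.cons_injective.injOn),
    sum_image hinj]

theorem compositionBlocks_two : compositionBlocks 2 = {[1, 1], [2]} := by
  rw [compositionBlocks_add_two, compositionBlocks_one]
  rfl

theorem exists_eq_cons_succ_cons_of_tail_headI_eq (h : l.tail.headI = l.headI + 1) :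
    ∃ a t, l = a :: (a + 1) :: t :=
  match l, h with
  | a :: _ :: t, h => ⟨a, t, by simp_all⟩

theorem filter_compositionBlocks_add_three :
    {l ∈ compositionBlocks (n + 3) | l.tail.headI = l.headI + 1} =
      (compositionBlocks n).image (fun t => 1 :: 2 :: t) ∪
        {l ∈ compositionBlocks (n + 1) | l.tail.headI = l.headI + 1}.image incHeadTwo := by
  ext l
  simp only [mem_union, mem_image, mem_filter, mem_compositionBlocks]
  constructor
  · rintro ⟨⟨hsum, hpos⟩, hgap⟩
    obtain ⟨a, t, rfl⟩ := exists_eq_cons_succ_cons_of_tail_headI_eq hgap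
    simp only [List.sum_cons, List.forall_mem_cons] at hsum hpos
    rcases (by omega : a = 1 ∨ 2 ≤ a) with rfl | ha
    · exact Or.inl ⟨t, ⟨by omega, hpos.2.2⟩, rfl⟩
    · refine Or.inr ⟨(a - 1) :: a :: t, ⟨⟨?_, ?_⟩, ?_⟩, ?_⟩
      · simp only [List.sum_cons]
        omega
      · simp only [List.forall_mem_cons]
        exact ⟨by omega, by omega, hpos.2.2⟩
      · simp only [List.tail_cons, List.headI_cons]
        omega
      · rw [incHeadTwo_cons_cons, Nat.sub_add_cancel (by omega)]
  · rintro (⟨t, ⟨hsum, hpos⟩, rfl⟩ | ⟨t, ⟨⟨hsum, hpos⟩, hgap⟩, rfl⟩)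
    · simp only [List.sum_cons, List.forall_mem_cons, List.tail_cons, List.headI_cons]
      exact ⟨⟨by omega, one_pos, two_pos, hpos⟩, trivial⟩
    · obtain ⟨a, t, rfl⟩ := exists_eq_cons_succ_cons_of_tail_headI_eq hgap
      simp only [List.sum_cons, List.forall_mem_cons] at hsum hpos
      simp only [incHeadTwo_cons_cons, List.sum_cons, List.forall_mem_cons, List.tail_cons,
        List.headI_cons]
      exact ⟨⟨by omega, a.succ_pos, (a + 1).succ_pos, hpos.2.2⟩, trivial⟩

end CompositionBlocks

theorem risesL_cons_cons (a b : ℕ) (t : List ℕ) :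
    risesL (a :: b :: t) = (if a < b then 1 else 0) + risesL (b :: t) := by
  simp only [risesL, List.tail_cons, List.zip_cons_cons, List.countP_cons, decide_eq_true_eq]
  omega

theorem risesL_one_cons (l : List ℕ) :
    risesL (1 :: l) = risesL l + if 2 ≤ l.headI then 1 else 0 := by
  obtain _ | ⟨b, t⟩ := l
  · rfl
  · rw [risesL_cons_cons]
    simp only [List.headI_cons]
    grind

theorem risesL_incHead (l : List ℕ) :
    risesL (incHead l) + (if l.tail.headI = l.headI + 1 then 1 else 0) = risesL l := by
  match l with
  | [] | [_] => simp [incHead, risesL]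
  | a :: b :: t =>
    simp only [incHead_cons, List.headI_cons, List.tail_cons, risesL_cons_cons]
    grind

def totalRises (n : ℕ) : ℕ := ∑ l ∈ compositionBlocks n, risesL l

theorem totalRises_add_two (n : ℕ) :
    totalRises (n + 2) + #{l ∈ compositionBlocks (n + 1) | l.tail.headI = l.headI + 1} =
      2 * totalRises (n + 1) + #{l ∈ compositionBlocks (n + 1) | 2 ≤ l.headI} := by
  have hinc : ∑ l ∈ compositionBlocks (n + 1), risesL (incHead l) +
      #{l ∈ compositionBlocks (n + 1) | l.tail.headI = l.headI + 1} = totalRises (n + 1) := by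
    rw [card_filter, ← sum_add_distrib]
    exact sum_congr rfl fun l _ => risesL_incHead l
  rw [totalRises, sum_compositionBlocks_add_two]
  simp only [risesL_one_cons, sum_add_distrib, ← card_filter]
  rw [← totalRises, ← hinc]
  ring

theorem card_filter_two_le_headI (n : ℕ) :
    #{l ∈ compositionBlocks (n + 2) | 2 ≤ l.headI} = 2 ^ n := by
  have hinc : ∀ l ∈ compositionBlocks (n + 1), 2 ≤ (incHead l).headI := fun l hl => by
    simpa [incHead] using one_le_headI_of_mem_compositionBlocks hl
  rw [card_filter, sum_compositionBlocks_add_two, sum_ite_of_false fun _ _ => by simp,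
    sum_ite_of_true hinc]
  simp [card_compositionBlocks]

theorem card_filter_tail_headI_eq_add_three (n : ℕ) :
    #{l ∈ compositionBlocks (n + 3) | l.tail.headI = l.headI + 1} =
      2 ^ (n - 1) + #{l ∈ compositionBlocks (n + 1) | l.tail.headI = l.headI + 1} := by
  rw [filter_compositionBlocks_add_three, card_union_of_disjoint, card_image_of_injective,
    card_compositionBlocks, card_image_of_injOn]
  · rintro s hs t ht heq
    obtain ⟨a, s, rfl⟩ := exists_eq_cons_succ_cons_of_tail_headI_eq (mem_filter.1 hs).2
    obtain ⟨b, t, rfl⟩ := exists_eq_cons_succ_cons_of_tail_headI_eq (mem_filter.1 ht).2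
    simpa using heq
  · intro s t heq
    simpa using heq
  · simp only [disjoint_left, mem_image, mem_filter]
    rintro _ ⟨s, _, rfl⟩ ⟨t, ⟨ht, _⟩, heq⟩
    have := one_le_headI_of_mem_compositionBlocks ht
    simp only [incHeadTwo, List.cons.injEq] at heq
    omega

theorem three_mul_card_filter_tail_headI_eq (m : ℕ) :
    3 * (#{l ∈ compositionBlocks (m + 2) | l.tail.headI = l.headI + 1} : ℤ) =
      2 ^ m - (-1) ^ m := by
  induction m using Nat.twoStepInduction with
  | zero => rw [compositionBlocks_two]; decide
  | one => rw [card_filter_tail_headI_eq_add_three, compositionBlocks_one]; decide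
  | more m ih _ =>
    rw [card_filter_tail_headI_eq_add_three]
    push_cast
    simp only [pow_succ] at *
    linear_combination ih

theorem nine_mul_totalRises (m : ℕ) :
    9 * (totalRises (m + 2) : ℤ) = 2 ^ m * (3 * m + 1) - (-1) ^ m := by
  induction m with
  | zero => rw [totalRises, compositionBlocks_two]; decide
  | succ m ih =>
    have hrec := congrArg (Nat.cast : ℕ → ℤ) (totalRises_add_two (m + 1))
    rw [card_filter_two_le_headI] at hrec
    have hgap := three_mul_card_filter_tail_headI_eq m
    push_cast at hrec ih ⊢
    linear_combination 9 * hrec + 2 * ih - 3 * hgap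

theorem stmt6 (n : ℕ) (hn : 3 ≤ n) :
    (9 : ℤ) * ∑ c : Composition n, (risesL c.blocks : ℤ)
      = 2 ^ (n - 2) * (3 * (n : ℤ) - 5) + (-1) ^ (n + 1) := by
  obtain ⟨m, rfl⟩ : ∃ m, n = m + 2 := ⟨n - 2, by omega⟩
  have h := nine_mul_totalRises m
  rw [totalRises, sum_compositionBlocks, Nat.cast_sum] at h
  rw [h, Nat.add_sub_cancel]
  push_cast
  ring
end

section
/- Let a < b be positive integers and A = {a,b}. For every integer n' ≥ 1: the total number of rises over all Carlitz compositions of n = (a+b)·n' with parts in {a,b} equals 2n'−1; and for every n' ≥ 1, the total number of rises over all Carlitz compositions of n = (a+b)·n' + a with parts in {a,b}, and likewise of n = (a+b)·n' + b, equals n'. -/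
open scoped Classical

/-- The set of Carlitz compositions of `n` with parts in `{a, b}`. -/
noncomputable def carlitzAB (a b n : ℕ) : Finset (Composition n) :=
  Finset.univ.filter (fun c : Composition n =>
    (∀ p ∈ c.blocks, p = a ∨ p = b) ∧ c.blocks.Chain' (· ≠ ·))

/-- alternating list of length m starting with x -/
def altL (x y : ℕ) : ℕ → List ℕ
  | 0 => []
  | m+1 => x :: altL y x m

lemma altL_two_step (x y m : ℕ) : altL x y (m+2) = x :: y :: altL x y m := rfl

lemma altL_length (x y : ℕ) : ∀ m, (altL x y m).length = m := by
  intro m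
  induction m generalizing x y with
  | zero => rfl
  | succ k ih => simp [altL, ih]

lemma altL_mem (x y : ℕ) : ∀ m, ∀ p ∈ altL x y m, p = x ∨ p = y := by
  intro m
  induction m generalizing x y with
  | zero => simp [altL]
  | succ k ih =>
    intro p hp
    simp only [altL, List.mem_cons] at hp
    rcases hp with h | h
    · exact Or.inl h
    · rcases ih y x p h with h | h
      · exact Or.inr h
      · exact Or.inl h

lemma altL_chain (x y : ℕ) (hxy : x ≠ y) : ∀ m, (altL x y m).Chain' (· ≠ ·) := by
  intro m
  induction m generalizing x y with
  | zero => exact List.isChain_nil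
  | succ k ih =>
    cases k with
    | zero => exact List.isChain_singleton _
    | succ j =>
      rw [altL_two_step]; refine List.isChain_cons_cons.mpr ?_
      exact ⟨hxy, ih y x hxy.symm⟩

lemma altL_sum_even (x y : ℕ) : ∀ k, (altL x y (2*k)).sum = k * (x + y) := by
  intro k
  induction k generalizing x y with
  | zero => simp [altL]
  | succ j ih =>
    have e : 2 * (j+1) = (2*j) + 2 := by ring
    rw [e, altL_two_step, List.sum_cons, List.sum_cons, ih]
    ring

lemma altL_sum_odd (x y : ℕ) (k : ℕ) : (altL x y (2*k+1)).sum = k * (x + y) + x := by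
  induction k with
  | zero => simp [altL]
  | succ j ih =>
    have e : 2*(j+1)+1 = (2*j+1) + 2 := by ring
    rw [e, altL_two_step, List.sum_cons, List.sum_cons, ih]
    ring

/-- classification of Carlitz lists with parts in {a,b} -/
lemma classify (a b : ℕ) : ∀ l : List ℕ,
    (∀ p ∈ l, p = a ∨ p = b) → l.Chain' (· ≠ ·) →
    l = altL a b l.length ∨ l = altL b a l.length := by
  intro l
  induction l with
  | nil => intro _ _; left; rfl
  | cons x t ih =>
    intro hmem hch
    have hmt : ∀ p ∈ t, p = a ∨ p = b := fun p hp => hmem p (List.mem_cons_of_mem _ hp)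
    have hct : t.Chain' (· ≠ ·) := hch.tail
    have hx := hmem x List.mem_cons_self
    rcases ih hmt hct with ht | ht
    · rcases hx with hx | hx
      · -- x = a, t = altL a b
        cases t with
        | nil => left; rw [hx] <;> rfl
        | cons z t' =>
          exfalso
          have h2 : z :: t' = a :: altL b a t'.length := ht
          have hz : z = a := (List.cons_eq_cons.mp h2).1
          have hne := (List.isChain_cons_cons.mp hch).1
          exact hne (hx.trans hz.symm)
      · -- x = b
        right
        rw [hx]
        show b :: t = b :: altL a b t.length
        rw [← ht]
    · rcases hx with hx | hx
      · -- x = a, t = altL b a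
        left
        rw [hx]
        show a :: t = a :: altL b a t.length
        rw [← ht]
      · -- x = b, t = altL b a
        cases t with
        | nil => right; rw [hx] <;> rfl
        | cons z t' =>
          exfalso
          have h2 : z :: t' = b :: altL a b t'.length := ht
          have hz : z = b := (List.cons_eq_cons.mp h2).1
          have hne := (List.isChain_cons_cons.mp hch).1
          exact hne (hx.trans hz.symm)

lemma risesL_altL_rec (x y : ℕ) (k : ℕ) (hk : 1 ≤ k) :
    risesL (altL x y (k+1)) = risesL (altL y x k) + (if x < y then 1 else 0) := by
  cases k with
  | zero => omega
  | succ j =>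
    simp only [altL, risesL, List.zip_cons_cons, List.countP_cons, List.tail_cons]
    simp only [decide_eq_true_eq]

/-- joint values of risesL on alternating lists, a < b -/
lemma risesL_altL_vals (a b : ℕ) (hab : a < b) : ∀ k, 1 ≤ k →
    risesL (altL a b (2*k)) = k ∧ risesL (altL b a (2*k)) = k - 1 ∧
    risesL (altL a b (2*k+1)) = k ∧ risesL (altL b a (2*k+1)) = k := by
  have hno : ¬ b < a := by omega
  intro k
  induction k with
  | zero => omega
  | succ j ih =>
    intro _
    cases Nat.eq_zero_or_pos j with
    | inl h0 =>
      subst h0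
      have g1 : risesL (altL a b (2*1)) = 1 := by
        show risesL [a, b] = 1
        simp [risesL, hab]
      have g2 : risesL (altL b a (2*1)) = 0 := by
        show risesL [b, a] = 0
        simp [risesL, hno]
      have g3 : risesL (altL a b (2*1+1)) = 1 := by
        show risesL [a, b, a] = 1
        simp [risesL, List.countP_cons, hab, hno]
      have g4 : risesL (altL b a (2*1+1)) = 1 := by
        show risesL [b, a, b] = 1
        simp [risesL, List.countP_cons, hab, hno]
      exact ⟨g1, g2, g3, g4⟩
    | inr hj =>
      obtain ⟨h1, h2, h3, h4⟩ := ih hj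
      have e1 : 2*(j+1) = (2*j+1) + 1 := by ring
      have e2 : 2*(j+1)+1 = (2*(j+1)) + 1 := by ring
      have r1 : risesL (altL a b (2*(j+1))) = j + 1 := by
        rw [e1, risesL_altL_rec a b _ (by omega), h4, if_pos hab] <;> omega
      have r2 : risesL (altL b a (2*(j+1))) = j := by
        rw [e1, risesL_altL_rec b a _ (by omega), h3, if_neg hno] <;> omega
      have r3 : risesL (altL a b (2*(j+1)+1)) = j + 1 := by
        rw [e2, risesL_altL_rec a b _ (by omega), r2, if_pos hab] <;> omega
      have r4 : risesL (altL b a (2*(j+1)+1)) = j + 1 := by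
        rw [e2, risesL_altL_rec b a _ (by omega), r1, if_neg hno] <;> omega
      exact ⟨r1, r2, by omega, by omega⟩

/-- uniqueness of quotient/remainder -/
lemma quot_rem_unique (A k n r s : ℕ) (hA : 0 < A) (hr : r < A) (hs : s < A)
    (h : k * A + r = n * A + s) : k = n ∧ r = s := by
  have hk : (k * A + r) / A = k := by
    rw [mul_comm, Nat.mul_add_div hA, Nat.div_eq_of_lt hr] <;> omega
  have hn : (n * A + s) / A = n := by
    rw [mul_comm, Nat.mul_add_div hA, Nat.div_eq_of_lt hs] <;> omega
  have hkn : k = n := by rw [← hk, h, hn]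
  subst hkn
  exact ⟨rfl, by omega⟩

lemma blocks_eq (a b n : ℕ) (c : Composition n) (hc : c ∈ carlitzAB a b n) :
    ∃ k, (c.blocks = altL a b (2*k) ∧ n = k*(a+b))
      ∨ (c.blocks = altL b a (2*k) ∧ n = k*(a+b))
      ∨ (c.blocks = altL a b (2*k+1) ∧ n = k*(a+b)+a)
      ∨ (c.blocks = altL b a (2*k+1) ∧ n = k*(a+b)+b) := by
  rw [carlitzAB, Finset.mem_filter] at hc
  obtain ⟨-, hmem, hch⟩ := hc
  obtain ⟨m, hm⟩ : ∃ m, c.blocks.length = m := ⟨_, rfl⟩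
  rcases classify a b c.blocks hmem hch with hcl | hcl <;> rw [hm] at hcl <;>
    [ (have hsum : (altL a b m).sum = n := by rw [← hcl]; exact c.blocks_sum);
      (have hsum : (altL b a m).sum = n := by rw [← hcl]; exact c.blocks_sum) ] <;>
    rcases Nat.even_or_odd m with ⟨k, hk⟩ | ⟨k, hk⟩ <;>
    have hk2 : m = 2*k ∨ m = 2*k+1 := by omega
  · refine ⟨k, Or.inl ⟨?_, ?_⟩⟩
    · rw [hcl]; congr 1 <;> omega
    · rw [show m = 2*k by omega, altL_sum_even] at hsum; rw [← hsum]
  · refine ⟨k, Or.inr (Or.inr (Or.inl ⟨?_, ?_⟩))⟩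
    · rw [hcl]; congr 1 <;> omega
    · rw [show m = 2*k+1 by omega, altL_sum_odd] at hsum; rw [← hsum]
  · refine ⟨k, Or.inr (Or.inl ⟨?_, ?_⟩)⟩
    · rw [hcl]; congr 1 <;> omega
    · rw [show m = 2*k by omega, altL_sum_even] at hsum; rw [← hsum]; ring
  · refine ⟨k, Or.inr (Or.inr (Or.inr ⟨?_, ?_⟩))⟩
    · rw [hcl]; congr 1 <;> omega
    · rw [show m = 2*k+1 by omega, altL_sum_odd] at hsum; rw [← hsum]; ring

/-- composition built from an alternating list -/
def altComp (a b m n : ℕ) (hpos : ∀ p ∈ altL a b m, 0 < p)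
    (hs : (altL a b m).sum = n) : Composition n :=
  ⟨altL a b m, fun hi => hpos _ hi, hs⟩

@[simp] lemma altComp_blocks (a b m n : ℕ) (hpos : ∀ p ∈ altL a b m, 0 < p)
    (hs : (altL a b m).sum = n) : (altComp a b m n hpos hs).blocks = altL a b m := rfl

theorem stmt15 (a b : ℕ) (ha : 0 < a) (hab : a < b) (n' : ℕ) (hn' : 1 ≤ n') :
    (∑ c ∈ carlitzAB a b ((a + b) * n'), risesL c.blocks) = 2 * n' - 1
    ∧ (∑ c ∈ carlitzAB a b ((a + b) * n' + a), risesL c.blocks) = n'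
    ∧ (∑ c ∈ carlitzAB a b ((a + b) * n' + b), risesL c.blocks) = n' := by
  have hb : 0 < b := lt_trans ha hab
  have hA : 0 < a + b := by omega
  have hne : a ≠ b := Nat.ne_of_lt hab
  obtain ⟨v1, v2, v3, v4⟩ := risesL_altL_vals a b hab n' hn'
  have posA : ∀ m, ∀ p ∈ altL a b m, 0 < p := fun m p hp => by
    rcases altL_mem a b m p hp with h | h <;> omega
  have posB : ∀ m, ∀ p ∈ altL b a m, 0 < p := fun m p hp => by
    rcases altL_mem b a m p hp with h | h <;> omega
  have memA : ∀ m, ∀ p ∈ altL a b m, p = a ∨ p = b := altL_mem a b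
  have memB : ∀ m, ∀ p ∈ altL b a m, p = a ∨ p = b := fun m p hp =>
    (altL_mem b a m p hp).symm
  have memCarl : ∀ (n : ℕ) (c : Composition n),
      ((∀ p ∈ c.blocks, p = a ∨ p = b) ∧ c.blocks.Chain' (· ≠ ·)) →
      c ∈ carlitzAB a b n := by
    intro n c h
    rw [carlitzAB, Finset.mem_filter]
    exact ⟨Finset.mem_univ _, h⟩
  have hs1 : (altL a b (2*n')).sum = (a+b)*n' := by rw [altL_sum_even]; ring
  have hs2 : (altL b a (2*n')).sum = (a+b)*n' := by rw [altL_sum_even]; ring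
  have hs3 : (altL a b (2*n'+1)).sum = (a+b)*n' + a := by rw [altL_sum_odd]; ring
  have hs4 : (altL b a (2*n'+1)).sum = (a+b)*n' + b := by rw [altL_sum_odd]; ring
  refine ⟨?_, ?_, ?_⟩
  · -- n = (a+b)*n'
    have e1 : carlitzAB a b ((a+b)*n') =
        {altComp a b (2*n') _ (posA _) hs1, altComp b a (2*n') _ (posB _) hs2} := by
      ext c
      rw [Finset.mem_insert, Finset.mem_singleton]
      constructor
      · intro hc
        obtain ⟨k, ⟨hbl, hs⟩ | ⟨hbl, hs⟩ | ⟨hbl, hs⟩ | ⟨hbl, hs⟩⟩ := blocks_eq a b _ c hc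
        · left
          have hkn := (quot_rem_unique (a+b) k n' 0 0 hA hA hA
            (by rw [mul_comm (a+b) n'] at hs; linarith)).1
          exact Composition.ext (by rw [hbl, hkn, altComp_blocks])
        · right
          have hkn := (quot_rem_unique (a+b) k n' 0 0 hA hA hA
            (by rw [mul_comm (a+b) n'] at hs; linarith)).1
          exact Composition.ext (by rw [hbl, hkn, altComp_blocks])
        · exfalso
          have := (quot_rem_unique (a+b) k n' a 0 hA (by omega) hA
            (by rw [mul_comm (a+b) n'] at hs; linarith)).2
          omega
        · exfalso
          have := (quot_rem_unique (a+b) k n' b 0 hA (by omega) hA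
            (by rw [mul_comm (a+b) n'] at hs; linarith)).2
          omega
      · intro hc
        rcases hc with rfl | rfl
        · exact memCarl _ _ ⟨memA _, altL_chain a b hne _⟩
        · exact memCarl _ _ ⟨memB _, altL_chain b a hne.symm _⟩
    have hC12 : altComp a b (2*n') _ (posA _) hs1 ≠ altComp b a (2*n') _ (posB _) hs2 := by
      intro h
      have h2 : risesL (altL a b (2*n')) = risesL (altL b a (2*n')) := by
        have := congrArg (fun c : Composition ((a+b)*n') => risesL c.blocks) h
        simpa using this
      rw [v1, v2] at h2
      omega
    rw [e1, Finset.sum_pair hC12, altComp_blocks, altComp_blocks, v1, v2]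
    omega
  · -- n = (a+b)*n' + a
    have e2 : carlitzAB a b ((a+b)*n'+a) = {altComp a b (2*n'+1) _ (posA _) hs3} := by
      ext c
      rw [Finset.mem_singleton]
      constructor
      · intro hc
        obtain ⟨k, ⟨hbl, hs⟩ | ⟨hbl, hs⟩ | ⟨hbl, hs⟩ | ⟨hbl, hs⟩⟩ := blocks_eq a b _ c hc
        · exfalso
          have := (quot_rem_unique (a+b) k n' 0 a hA hA (by omega)
            (by rw [mul_comm (a+b) n'] at hs; linarith)).2
          omega
        · exfalso
          have := (quot_rem_unique (a+b) k n' 0 a hA hA (by omega)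
            (by rw [mul_comm (a+b) n'] at hs; linarith)).2
          omega
        · have hkn := (quot_rem_unique (a+b) k n' a a hA (by omega) (by omega)
            (by rw [mul_comm (a+b) n'] at hs; linarith)).1
          exact Composition.ext (by rw [hbl, hkn, altComp_blocks])
        · exfalso
          have := (quot_rem_unique (a+b) k n' b a hA (by omega) (by omega)
            (by rw [mul_comm (a+b) n'] at hs; linarith)).2
          omega
      · intro hc
        subst hc
        exact memCarl _ _ ⟨memA _, altL_chain a b hne _⟩
    rw [e2, Finset.sum_singleton, altComp_blocks, v3]
  · -- n = (a+b)*n' + b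
    have e3 : carlitzAB a b ((a+b)*n'+b) = {altComp b a (2*n'+1) _ (posB _) hs4} := by
      ext c
      rw [Finset.mem_singleton]
      constructor
      · intro hc
        obtain ⟨k, ⟨hbl, hs⟩ | ⟨hbl, hs⟩ | ⟨hbl, hs⟩ | ⟨hbl, hs⟩⟩ := blocks_eq a b _ c hc
        · exfalso
          have := (quot_rem_unique (a+b) k n' 0 b hA hA (by omega)
            (by rw [mul_comm (a+b) n'] at hs; linarith)).2
          omega
        · exfalso
          have := (quot_rem_unique (a+b) k n' 0 b hA hA (by omega)
            (by rw [mul_comm (a+b) n'] at hs; linarith)).2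
          omega
        · exfalso
          have := (quot_rem_unique (a+b) k n' a b hA (by omega) (by omega)
            (by rw [mul_comm (a+b) n'] at hs; linarith)).2
          omega
        · have hkn := (quot_rem_unique (a+b) k n' b b hA (by omega) (by omega)
            (by rw [mul_comm (a+b) n'] at hs; linarith)).1
          exact Composition.ext (by rw [hbl, hkn, altComp_blocks])
      · intro hc
        subst hc
        exact memCarl _ _ ⟨memB _, altL_chain b a hne.symm _⟩
    rw [e3, Finset.sum_singleton, altComp_blocks, v4]
end
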